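/- arXiv:math/0010082 — 4 statements merged into one kernel-verified Lean document; each statement's English description precedes it below -/
import Mathlib

section
/- Let ψ : N₁ → N₂ be a homomorphism of finitely generated free abelian groups whose image ψ(N₁) has finite index d in N₂. Let Mᵢ = Hom(Nᵢ, ℤ) and let ψ† : M₂ → M₁ be the dual homomorphism u ↦ u ∘ ψ. Then the precomposition map Hom(M₁, ℂˣ) → Hom(M₂, ℂˣ), χ ↦ χ ∘ ψ†, on groups of group homomorphisms from the additive groups Mᵢ to ℂˣ, is surjective, and its kernel is isomorphic as an abstract group to (ℂˣ)^{r₁ − r₂} × G, where rᵢ is the rank of Nᵢ and G is a finite abelian group isomorphic to N₂/ψ(N₁) (so of cardinality d). -/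
/-- Precomposition with a homomorphism, as a homomorphism of hom-groups. -/
def precompHom {A B C : Type*} [AddCommGroup A] [AddCommGroup B] [AddCommGroup C]
    (f : A →+ B) : (B →+ C) →+ (A →+ C) where
  toFun g := g.comp f
  map_zero' := by ext a; rfl
  map_add' g h := by ext a; rfl

/-- Every unit of `ℂ` has an `n`-th root for `n ≠ 0`. -/
private lemma exists_units_pow_eq (z : ℂˣ) {n : ℕ} (hn : n ≠ 0) : ∃ w : ℂˣ, w ^ n = z := by
  obtain ⟨x, hx⟩ := IsAlgClosed.exists_root (Polynomial.X ^ n - Polynomial.C (z : ℂ))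
    (by rw [Polynomial.degree_X_pow_sub_C (Nat.pos_of_ne_zero hn)]
        exact_mod_cast (Nat.cast_injective.ne_iff.mpr hn : (n : WithBot ℕ) ≠ (0 : ℕ)))
  have hxn : x ^ n = (z : ℂ) := by
    have := hx
    simp only [Polynomial.IsRoot, Polynomial.eval_sub, Polynomial.eval_pow,
      Polynomial.eval_X, Polynomial.eval_C, sub_eq_zero] at this
    exact this
  have hx0 : x ≠ 0 := by
    intro h
    rw [h, zero_pow hn] at hxn
    exact z.ne_zero hxn.symm
  exact ⟨Units.mk0 x hx0, Units.ext (by simpa using hxn)⟩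

private lemma exists_units_zpow_eq (z : ℂˣ) {n : ℤ} (hn : n ≠ 0) : ∃ w : ℂˣ, w ^ n = z := by
  rcases n with n | n
  · have hn' : n ≠ 0 := by simpa using hn
    obtain ⟨w, hw⟩ := exists_units_pow_eq z hn'
    exact ⟨w, by rw [Int.ofNat_eq_coe, zpow_natCast, hw]⟩
  · obtain ⟨w, hw⟩ := exists_units_pow_eq z⁻¹ (Nat.succ_ne_zero n)
    refine ⟨w, ?_⟩
    rw [zpow_negSucc]
    rw [show w ^ (n + 1) = z⁻¹ from hw]
    exact inv_inv z

/-- The kernel of precomposition is homs from the quotient. -/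
private noncomputable def kerEquivQuotientHom {A B C : Type*} [AddCommGroup A] [AddCommGroup B]
    [AddCommGroup C] (f : A →+ B) :
    (precompHom (C := C) f).ker ≃+ ((B ⧸ f.range) →+ C) := by
  refine (AddEquiv.ofBijective
    (((precompHom (C := C) (QuotientAddGroup.mk' f.range))).codRestrict
      (precompHom (C := C) f).ker (fun φ => ?_)) ⟨?_, ?_⟩).symm
  · rw [AddMonoidHom.mem_ker]
    ext a
    show φ ((QuotientAddGroup.mk' f.range) (f a)) = 0
    have h0 : ((QuotientAddGroup.mk' f.range) (f a)) = 0 := by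
      rw [QuotientAddGroup.mk'_apply, QuotientAddGroup.eq_zero_iff]
      exact AddMonoidHom.mem_range.mpr ⟨a, rfl⟩
    rw [h0, map_zero]
  · intro φ φ' h
    have h' : φ.comp (QuotientAddGroup.mk' f.range) = φ'.comp (QuotientAddGroup.mk' f.range) :=
      congrArg Subtype.val h
    ext q
    exact DFunLike.congr_fun h' q
  · rintro ⟨χ, hχ⟩
    have hle : f.range ≤ χ.ker := by
      rintro b ⟨a, rfl⟩
      rw [AddMonoidHom.mem_ker]
      have h0 : χ.comp f = 0 := hχ
      exact DFunLike.congr_fun h0 a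
    refine ⟨QuotientAddGroup.lift f.range χ hle, ?_⟩
    apply Subtype.ext
    ext a
    exact QuotientAddGroup.lift_mk' f.range hle a

/-- Homs from a product. -/
private def prodHomEquiv {A B C : Type*} [AddCommGroup A] [AddCommGroup B] [AddCommGroup C] :
    ((A × B) →+ C) ≃+ (A →+ C) × (B →+ C) where
  toFun φ := (φ.comp (AddMonoidHom.inl A B), φ.comp (AddMonoidHom.inr A B))
  invFun p := (p.1.comp (AddMonoidHom.fst A B)) + (p.2.comp (AddMonoidHom.snd A B))
  left_inv φ := by
    ext ⟨a, b⟩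
    show φ (a, 0) + φ (0, b) = φ (a, b)
    rw [← map_add]
    simp
  right_inv p := by
    refine Prod.ext ?_ ?_ <;> ext x <;> simp
  map_add' φ ψ := by
    refine Prod.ext ?_ ?_ <;> ext x <;> rfl

/-- Homs from `ℤ`. -/
private def intHomEquiv {A : Type*} [AddCommGroup A] : (ℤ →+ A) ≃+ A where
  toFun f := f 1
  invFun a := zmultiplesHom A a
  left_inv f := AddMonoidHom.ext_int (by simp)
  right_inv a := by simp
  map_add' f g := rfl

/-- `(T →+ Additive G) ≃+ Additive (Multiplicative T →* G)`. -/
private def homToMulEquiv (T : Type*) [AddCommGroup T] (G : Type*) [CommGroup G] :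
    (T →+ Additive G) ≃+ Additive (Multiplicative T →* G) where
  toFun f := Additive.ofMul (AddMonoidHom.toMultiplicativeLeft f)
  invFun g := AddMonoidHom.toMultiplicativeLeft.symm g.toMul
  left_inv f := AddMonoidHom.toMultiplicativeLeft.left_inv f
  right_inv g := congrArg Additive.ofMul (AddMonoidHom.toMultiplicativeLeft.right_inv g.toMul)
  map_add' f g := by
    apply Additive.toMul.injective
    ext x
    rfl

/-- `Additive (Multiplicative T) ≃+ T`. -/
private def addMulAddEquiv (T : Type*) [AddCommGroup T] : Additive (Multiplicative T) ≃+ T where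
  toFun x := Multiplicative.toAdd (Additive.toMul x)
  invFun t := Additive.ofMul (Multiplicative.ofAdd t)
  left_inv _ := rfl
  right_inv _ := rfl
  map_add' _ _ := rfl

set_option maxHeartbeats 1000000 in
/-- Key computation in the proof of Proposition 2.1.4: for `ψ : N₁ → N₂` between
lattices with image of finite index `d`, the induced morphism of tori
`Hom(M₁, ℂˣ) → Hom(M₂, ℂˣ)` (precomposition with the dual map `ψ†`) is surjective,
and its kernel is isomorphic to `(ℂˣ)^(r₁ - r₂) × (N₂/ψ(N₁))`. -/
theorem stmt_2 {N₁ N₂ : Type*} [AddCommGroup N₁] [AddCommGroup N₂]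
    [Module.Free ℤ N₁] [Module.Finite ℤ N₁]
    [Module.Free ℤ N₂] [Module.Finite ℤ N₂]
    (ψ : N₁ →+ N₂) (d : ℕ)
    (hfin : Finite (N₂ ⧸ ψ.range)) (hd : Nat.card (N₂ ⧸ ψ.range) = d) :
    Function.Surjective
      (precompHom (C := Additive ℂˣ) (precompHom (C := ℤ) ψ)) ∧
    Nonempty
      ((precompHom (C := Additive ℂˣ) (precompHom (C := ℤ) ψ)).ker ≃+
        ((Fin (Module.finrank ℤ N₁ - Module.finrank ℤ N₂) → Additive ℂˣ) ×
          (N₂ ⧸ ψ.range))) := by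
  classical
  -- notation
  let ψₗ : N₁ →ₗ[ℤ] N₂ := ψ.toIntLinearMap
  let P : Submodule ℤ N₂ := LinearMap.range ψₗ
  have hP : ∀ x : N₂, x ∈ P ↔ x ∈ ψ.range := fun x => Iff.rfl
  obtain ⟨n, snf⟩ := P.smithNormalForm (Module.finBasis ℤ N₂)
  -- snf.f is surjective since the quotient is finite
  have hfsurj : Function.Surjective snf.f := by
    intro j
    by_contra hj
    have hj' : j ∉ Set.range ⇑snf.f := by
      rintro ⟨i, rfl⟩; exact hj ⟨i, rfl⟩
    set u : N₂ →+ ℤ := (snf.bM.coord j).toAddMonoidHom with hu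
    have hu0 : ∀ x ∈ ψ.range, u x = 0 := by
      rintro x hx
      have hxP : x ∈ P := (hP x).mpr hx
      simpa [hu, Module.Basis.coord_apply] using snf.repr_eq_zero_of_notMem_range ⟨x, hxP⟩ hj'
    have hzero : ∀ x : N₂, u x = 0 := by
      intro x
      have h1 : (Nat.card (N₂ ⧸ ψ.range)) • ((QuotientAddGroup.mk' ψ.range) x) = 0 :=
        card_nsmul_eq_zero'
      rw [← map_nsmul] at h1
      have h2 : (Nat.card (N₂ ⧸ ψ.range)) • x ∈ ψ.range := by
        rwa [QuotientAddGroup.mk'_apply, QuotientAddGroup.eq_zero_iff] at h1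
      have h3 := hu0 _ h2
      rw [map_nsmul, nsmul_eq_mul] at h3
      have hd0 : Nat.card (N₂ ⧸ ψ.range) ≠ 0 := Nat.card_ne_zero.mpr ⟨⟨0⟩, hfin⟩
      have : ((Nat.card (N₂ ⧸ ψ.range) : ℤ)) ≠ 0 := by exact_mod_cast hd0
      exact (mul_eq_zero.mp h3).resolve_left this
    have hbad := hzero (snf.bM j)
    rw [hu] at hbad
    simp [Module.Basis.coord_apply, Module.Basis.repr_self] at hbad
  have hbij : Function.Bijective ⇑snf.f := ⟨snf.f.injective, hfsurj⟩
  let e : Fin n ≃ Fin (Module.finrank ℤ N₂) := Equiv.ofBijective _ hbij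
  let b : Module.Basis (Fin (Module.finrank ℤ N₂)) ℤ N₂ := snf.bM
  let c : Module.Basis (Fin (Module.finrank ℤ N₂)) ℤ P := snf.bN.reindex e
  let a' : Fin (Module.finrank ℤ N₂) → ℤ := snf.a ∘ e.symm
  have hca : ∀ j, (c j : N₂) = a' j • b j := by
    intro j
    have h1 : c j = snf.bN (e.symm j) := snf.bN.reindex_apply e j
    have h2 : snf.f (e.symm j) = j := by
      rw [← Equiv.ofBijective_apply (⇑snf.f) hbij]
      exact e.apply_symm_apply j
    rw [h1, snf.snf (e.symm j), h2]
    rfl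
  have ha0 : ∀ j, a' j ≠ 0 := by
    intro j h
    have hcj : ((c j : N₂)) = 0 := by rw [hca j, h, zero_smul]
    exact c.ne_zero j (ZeroMemClass.coe_eq_zero.mp hcj)
  haveI hNZ : ∀ j, NeZero (a' j).natAbs := fun j => ⟨Int.natAbs_ne_zero.mpr (ha0 j)⟩
  -- the finite group T
  let T := ∀ j : Fin (Module.finrank ℤ N₂), ZMod (a' j).natAbs
  let h₂ : N₂ →+ T :=
    { toFun := fun x j => ((b.repr x j : ℤ) : ZMod (a' j).natAbs)
      map_zero' := by
        funext j
        show ((b.repr 0 j : ℤ) : ZMod (a' j).natAbs) = 0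
        simp
      map_add' := fun x y => by
        funext j
        show ((b.repr (x + y) j : ℤ) : ZMod (a' j).natAbs) =
          ((b.repr x j : ℤ) : ZMod (a' j).natAbs) + ((b.repr y j : ℤ) : ZMod (a' j).natAbs)
        simp [map_add] }
  have hh₂ : ∀ (x : N₂) (j), h₂ x j = ((b.repr x j : ℤ) : ZMod (a' j).natAbs) := fun _ _ => rfl
  have hmemP : ∀ x : N₂, x ∈ P ↔ ∀ j, a' j ∣ b.repr x j := by
    intro x
    constructor
    · intro hx j
      have hx' : (⟨x, hx⟩ : P) = ∑ i, c.repr ⟨x, hx⟩ i • c i := (c.sum_repr _).symm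
      have hx'' : x = ∑ i, (c.repr ⟨x, hx⟩ i * a' i) • b i := by
        have := congrArg (P.subtype) hx'
        rw [map_sum] at this
        simpa [hca, smul_smul] using this
      have := congrFun (b.repr_sum_self (fun i => c.repr ⟨x, hx⟩ i * a' i)) j
      rw [← hx''] at this
      exact Dvd.intro_left _ this.symm
    · intro hdvd
      choose w hw using hdvd
      have hx : x = ∑ j, w j • (c j : N₂) := by
        conv_lhs => rw [← b.sum_repr x]
        refine Finset.sum_congr rfl (fun j _ => ?_)
        rw [hca j, hw j, smul_smul, mul_comm]
      rw [hx]
      exact Submodule.sum_mem _ (fun j _ => Submodule.smul_mem _ _ (c j).2)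
  have hker₂ : ψ.range = h₂.ker := by
    ext x
    rw [AddMonoidHom.mem_ker, ← hP]
    rw [hmemP x]
    constructor
    · intro h
      funext j
      show ((b.repr x j : ℤ) : ZMod (a' j).natAbs) = 0
      rw [ZMod.intCast_zmod_eq_zero_iff_dvd, Int.natAbs_dvd]
      exact h j
    · intro h j
      have h5 : ((b.repr x j : ℤ) : ZMod (a' j).natAbs) = 0 := congrFun h j
      rw [← Int.natAbs_dvd]
      exact (ZMod.intCast_zmod_eq_zero_iff_dvd _ _).mp h5
  have hsurj₂ : Function.Surjective h₂ := by
    intro t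
    choose y hy using fun j => ZMod.intCast_surjective (t j)
    refine ⟨∑ j, y j • b j, ?_⟩
    funext j
    rw [hh₂, congrFun (b.repr_sum_self y) j]
    exact hy j
  let E₃ : (N₂ ⧸ ψ.range) ≃+ T :=
    (QuotientAddGroup.quotientAddEquivOfEq hker₂).trans
      (QuotientAddGroup.quotientKerEquivOfSurjective h₂ hsurj₂)
  -- the N₁ side: split off the kernel
  haveI hPfree : Module.Free ℤ P := Module.Free.of_basis c
  let ψ' : N₁ →ₗ[ℤ] P := ψₗ.rangeRestrict
  obtain ⟨σ, hσ⟩ := Module.projective_lifting_property ψ' LinearMap.id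
    (LinearMap.surjective_rangeRestrict ψₗ)
  have hσ' : ∀ p : P, ψ' (σ p) = p := fun p => LinearMap.congr_fun hσ p
  let K : Submodule ℤ N₁ := LinearMap.ker ψₗ
  have hψ'K : ∀ x : N₁, x ∈ K → ψ' x = 0 := by
    intro x hx
    apply Subtype.coe_injective
    exact hx
  obtain ⟨m, kb⟩ := Submodule.basisOfPid (Module.finBasis ℤ N₁) K
  let u₁ : (K × P) →ₗ[ℤ] N₁ := K.subtype.coprod σ
  let w₁ : N₁ →ₗ[ℤ] N₁ := LinearMap.id - σ.comp ψ'
  have hv₁mem : ∀ x : N₁, w₁ x ∈ K := by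
    intro x
    have h6 : ψ' (x - σ (ψ' x)) = 0 := by
      rw [map_sub, hσ' (ψ' x), sub_self]
    show ψₗ (x - σ (ψ' x)) = 0
    have h7 : ψₗ (x - σ (ψ' x)) = (ψ' (x - σ (ψ' x)) : N₂) := rfl
    rw [h7, h6]
    rfl
  let v₁ : N₁ →ₗ[ℤ] (K × P) := (LinearMap.codRestrict K w₁ hv₁mem).prod ψ'
  have huv : ∀ x : N₁, u₁ (v₁ x) = x := by
    intro x
    show (x - σ (ψ' x)) + σ (ψ' x) = x
    abel
  have hvu : ∀ kp : K × P, v₁ (u₁ kp) = kp := by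
    rintro ⟨k, p⟩
    have hu : u₁ (k, p) = (k : N₁) + σ p := rfl
    have hψk : ψ' ((k : N₁) + σ p) = p := by
      rw [map_add, hψ'K _ k.2, hσ' p, zero_add]
    refine Prod.ext (Subtype.coe_injective ?_) ?_
    · show ((k : N₁) + σ p) - σ (ψ' ((k : N₁) + σ p)) = (k : N₁)
      rw [hψk]
      abel
    · exact hψk
  let eKP : (K × P) ≃ₗ[ℤ] N₁ :=
    LinearEquiv.ofLinear u₁ v₁ (LinearMap.ext huv) (LinearMap.ext hvu)
  let B₁ : Module.Basis (Fin m ⊕ Fin (Module.finrank ℤ N₂)) ℤ N₁ := (kb.prod c).map eKP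
  have hB₁l : ∀ l, ψ (B₁ (Sum.inl l)) = 0 := by
    intro l
    have h8 : B₁ (Sum.inl l) = u₁ ((kb.prod c) (Sum.inl l)) := rfl
    have h9 : (kb.prod c) (Sum.inl l) = ((kb l, 0) : K × P) := by
      simp [Module.Basis.prod_apply]
    rw [h8, h9]
    have h10 : u₁ ((kb l, 0) : K × P) = (kb l : N₁) + σ 0 := rfl
    rw [h10, map_zero, add_zero]
    exact (kb l).2
  have hB₁r : ∀ j, ψ (B₁ (Sum.inr j)) = a' j • b j := by
    intro j
    have h8 : B₁ (Sum.inr j) = u₁ ((kb.prod c) (Sum.inr j)) := rfl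
    have h9 : (kb.prod c) (Sum.inr j) = ((0, c j) : K × P) := by
      simp [Module.Basis.prod_apply]
    rw [h8, h9]
    have h10 : u₁ ((0, c j) : K × P) = σ (c j) := by
      show (((0 : K) : N₁)) + σ (c j) = σ (c j)
      rw [ZeroMemClass.coe_zero, zero_add]
    rw [h10]
    have h11 : ψ (σ (c j)) = (ψ' (σ (c j)) : N₂) := rfl
    rw [h11, hσ' (c j), hca j]
  -- coordinates on M₁ = N₁ →+ ℤ and M₂ = N₂ →+ ℤ
  let E₁ : (N₁ →+ ℤ) ≃ₗ[ℤ] ((Fin m ⊕ Fin (Module.finrank ℤ N₂)) → ℤ) :=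
    (addMonoidHomLequivInt (A := N₁) (B := ℤ) ℤ).trans B₁.dualBasis.equivFun
  have hE₁ : ∀ (f : N₁ →+ ℤ) t, E₁ f t = f (B₁ t) := by
    intro f t
    show B₁.dualBasis.equivFun (addMonoidHomLequivInt (A := N₁) (B := ℤ) ℤ f) t = f (B₁ t)
    rw [Module.Basis.equivFun_apply, Module.Basis.dualBasis_repr]
    rfl
  let E₂ : (N₂ →+ ℤ) ≃ₗ[ℤ] (Fin (Module.finrank ℤ N₂) → ℤ) :=
    (addMonoidHomLequivInt (A := N₂) (B := ℤ) ℤ).trans b.dualBasis.equivFun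
  have hE₂ : ∀ (f : N₂ →+ ℤ) j, E₂ f j = f (b j) := by
    intro f j
    show b.dualBasis.equivFun (addMonoidHomLequivInt (A := N₂) (B := ℤ) ℤ f) j = f (b j)
    rw [Module.Basis.equivFun_apply, Module.Basis.dualBasis_repr]
    rfl
  set g : (N₂ →+ ℤ) →+ (N₁ →+ ℤ) := precompHom (C := ℤ) ψ with hg
  have hgval : ∀ (v : N₂ →+ ℤ) t, (g v) (B₁ t) = v (ψ (B₁ t)) := fun _ _ => rfl
  -- the quotient of M₁ by the image of M₂
  let h₁ : (N₁ →+ ℤ) →+ ((Fin m → ℤ) × T) :=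
    { toFun := fun f => (fun l => f (B₁ (Sum.inl l)),
        fun j => ((f (B₁ (Sum.inr j)) : ℤ) : ZMod (a' j).natAbs))
      map_zero' := by
        refine Prod.ext ?_ ?_ <;> funext x <;> simp <;> rfl
      map_add' := fun f f' => by
        refine Prod.ext ?_ ?_ <;> funext x
        · rfl
        · show ((((f + f') (B₁ (Sum.inr x))) : ℤ) : ZMod (a' x).natAbs) =
            ((f (B₁ (Sum.inr x)) : ℤ) : ZMod (a' x).natAbs) +
            ((f' (B₁ (Sum.inr x)) : ℤ) : ZMod (a' x).natAbs)
          rw [AddMonoidHom.add_apply, Int.cast_add] }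
  have hh₁ : ∀ (f : N₁ →+ ℤ), h₁ f = (fun l => f (B₁ (Sum.inl l)),
      fun j => ((f (B₁ (Sum.inr j)) : ℤ) : ZMod (a' j).natAbs)) := fun _ => rfl
  have hker₁ : g.range = h₁.ker := by
    ext f
    constructor
    · rintro ⟨v, rfl⟩
      rw [AddMonoidHom.mem_ker, hh₁]
      refine Prod.ext ?_ ?_ <;> funext x
      · show (g v) (B₁ (Sum.inl x)) = 0
        rw [hgval, hB₁l, map_zero]
      · show (((g v) (B₁ (Sum.inr x)) : ℤ) : ZMod (a' x).natAbs) = 0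
        rw [hgval, hB₁r, map_zsmul, ZMod.intCast_zmod_eq_zero_iff_dvd, Int.natAbs_dvd,
          smul_eq_mul]
        exact Dvd.intro _ rfl
    · intro hf
      rw [AddMonoidHom.mem_ker] at hf
      have hfl : ∀ l, f (B₁ (Sum.inl l)) = 0 := fun l => congrFun (congrArg Prod.fst hf) l
      have hfr : ∀ j, a' j ∣ f (B₁ (Sum.inr j)) := by
        intro j
        have h12 : ((f (B₁ (Sum.inr j)) : ℤ) : ZMod (a' j).natAbs) = 0 :=
          congrFun (congrArg Prod.snd hf) j
        rw [← Int.natAbs_dvd]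
        exact (ZMod.intCast_zmod_eq_zero_iff_dvd _ _).mp h12
      choose w hw using hfr
      let v : N₂ →+ ℤ := (b.constr ℤ w).toAddMonoidHom
      have hv : ∀ j, v (b j) = w j := fun j => b.constr_basis ℤ w j
      refine ⟨v, ?_⟩
      apply E₁.injective
      funext t
      rw [hE₁, hE₁]
      rcases t with l | j
      · rw [hgval, hB₁l, map_zero, hfl]
      · rw [hgval, hB₁r, map_zsmul, hv, smul_eq_mul, ← hw]
  have hsurj₁ : Function.Surjective h₁ := by
    rintro ⟨x, t⟩
    choose y hy using fun j => ZMod.intCast_surjective (t j)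
    refine ⟨E₁.symm (Sum.elim x y), ?_⟩
    rw [hh₁]
    have hval : ∀ s, (E₁.symm (Sum.elim x y)) (B₁ s) = Sum.elim x y s := by
      intro s
      rw [← hE₁]
      rw [E₁.apply_symm_apply]
    refine Prod.ext ?_ ?_ <;> funext s
    · show (E₁.symm (Sum.elim x y)) (B₁ (Sum.inl s)) = x s
      rw [hval (Sum.inl s)]
      rfl
    · show (((E₁.symm (Sum.elim x y)) (B₁ (Sum.inr s)) : ℤ) : ZMod (a' s).natAbs) = t s
      rw [hval (Sum.inr s)]
      exact hy s
  let E₄ : ((N₁ →+ ℤ) ⧸ g.range) ≃+ ((Fin m → ℤ) × T) :=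
    (QuotientAddGroup.quotientAddEquivOfEq hker₁).trans
      (QuotientAddGroup.quotientKerEquivOfSurjective h₁ hsurj₁)
  -- dual basis elements of M₂
  let dj : Fin (Module.finrank ℤ N₂) → (N₂ →+ ℤ) := fun j => (b.coord j).toAddMonoidHom
  have hdjb : ∀ j i, dj j (b i) = if i = j then 1 else 0 := by
    intro j i
    show b.coord j (b i) = _
    rw [Module.Basis.coord_apply, Module.Basis.repr_self]
    exact Finsupp.single_apply
  have hsingle : ∀ (i : Fin (Module.finrank ℤ N₂)) (x : ℤ),
      E₂.symm (Pi.single i x) = x • dj i := by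
    intro i x
    apply E₂.injective
    rw [E₂.apply_symm_apply]
    funext j
    rw [hE₂]
    show (Pi.single i x : Fin (Module.finrank ℤ N₂) → ℤ) j = x • (dj i (b j))
    rw [hdjb]
    by_cases hij : j = i
    · subst hij; simp
    · simp [hij, Ne.symm hij]
  have hext₂ : ∀ (p q : (N₂ →+ ℤ) →+ Additive ℂˣ),
      (∀ j, p (dj j) = q (dj j)) → p = q := by
    intro p q h
    have h14 : p.comp (E₂.symm.toLinearMap.toAddMonoidHom) =
        q.comp (E₂.symm.toLinearMap.toAddMonoidHom) := by
      apply AddMonoidHom.functions_ext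
      intro i x
      show p (E₂.symm (Pi.single i x)) = q (E₂.symm (Pi.single i x))
      rw [hsingle, map_zsmul, map_zsmul, h i]
    apply AddMonoidHom.ext; intro v
    have := DFunLike.congr_fun h14 (E₂ v)
    simpa [E₂.symm_apply_apply] using this
  -- Part 1 : surjectivity
  have hsurjF : Function.Surjective (precompHom (C := Additive ℂˣ) g) := by
    intro χ
    choose w hw using fun j => exists_units_zpow_eq (Additive.toMul (χ (dj j))) (ha0 j)
    let W : (Fin m ⊕ Fin (Module.finrank ℤ N₂)) → Additive ℂˣ :=
      Sum.elim (fun _ => 0) (fun j => Additive.ofMul (w j))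
    let θ : ((Fin m ⊕ Fin (Module.finrank ℤ N₂)) → ℤ) →+ Additive ℂˣ :=
      ∑ t, (zmultiplesHom _ (W t)).comp (Pi.evalAddMonoidHom (fun _ => ℤ) t)
    have hθ : ∀ x, θ x = ∑ t, x t • W t := by
      intro x
      rw [AddMonoidHom.finset_sum_apply]
      exact Finset.sum_congr rfl fun t _ => rfl
    refine ⟨θ.comp (E₁.toLinearMap.toAddMonoidHom), ?_⟩
    apply hext₂
    intro j
    show θ (E₁ (g (dj j))) = χ (dj j)
    rw [hθ]
    have hterm : ∀ t, (E₁ (g (dj j))) t • W t =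
        if t = Sum.inr j then a' j • Additive.ofMul (w j) else 0 := by
      intro t
      rcases t with l | i
      · simp [W]
      · rw [hE₁, hgval, hB₁r, map_zsmul, hdjb]
        by_cases hij : i = j
        · subst hij
          simp [W]
        · simp [W, hij]
    rw [Finset.sum_congr rfl fun t _ => hterm t, Finset.sum_ite_eq']
    simp only [Finset.mem_univ, if_true]
    rw [← ofMul_zpow, hw j]
    rfl
  -- Part 2 : the kernel
  haveI : Finite T := inferInstance
  haveI : NeZero (Monoid.exponent (Multiplicative T)) := ⟨Monoid.exponent_ne_zero_of_finite⟩
  obtain ⟨E⟩ := CommGroup.monoidHom_mulEquiv_of_hasEnoughRootsOfUnity (Multiplicative T) ℂ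
  let eT : (T →+ Additive ℂˣ) ≃+ T :=
    (homToMulEquiv T ℂˣ).trans ((MulEquiv.toAdditive E).trans (addMulAddEquiv T))
  let eFree : ((Fin m → ℤ) →+ Additive ℂˣ) ≃+ (Fin m → Additive ℂˣ) :=
    (Pi.addMonoidHomAddEquiv (fun _ : Fin m => ℤ) (Additive ℂˣ)).trans
      (AddEquiv.piCongrRight fun _ => intHomEquiv)
  have hm : Module.finrank ℤ N₁ - Module.finrank ℤ N₂ = m := by
    have h13 : Module.finrank ℤ N₁ = m + Module.finrank ℤ N₂ := by
      rw [Module.finrank_eq_card_basis B₁]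
      simp
    omega
  refine ⟨hsurjF, ?_⟩
  rw [hm]
  exact ⟨(kerEquivQuotientHom g).trans
    ((AddEquiv.addMonoidHomCongrLeft (N := Additive ℂˣ) E₄).trans
      (prodHomEquiv.trans (AddEquiv.prodCongr eFree (eT.trans E₃.symm))))⟩
end

section
/- Let φ : N' → N be a surjective homomorphism of finitely generated free abelian groups, with dual homomorphism φ† : M → M' between the dual lattices M = Hom(N, ℤ) and M' = Hom(N', ℤ). Let P be a subgroup of N, and let Q be a subgroup of N' with Q ⊆ φ⁻¹(P) and with N'/Q torsion-free. Then the evaluation pairing N' × M' → ℤ induces a well-defined ℤ-bilinear pairing (φ⁻¹(P)/Q) × (Ann(Q)/φ†(Ann(P))) → ℤ, ([a], [m']) ↦ m'(a), and this pairing is nondegenerate: if m'(a) = 0 for all m' ∈ Ann(Q) and some a ∈ φ⁻¹(P), then a ∈ Q; and if m' ∈ Ann(Q) satisfies m'(a) = 0 for all a ∈ φ⁻¹(P), then m' ∈ φ†(Ann(P)). -/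
/-- The nondegenerate pairing `(φ⁻¹(P)/Q) × (Ann(Q)/φ†(Ann(P))) → ℤ` from the
paper's proof of Lemma 2.1.14: it is well defined (bilinear descent to the
quotients) and nondegenerate on both sides. -/
theorem stmt_4 {N' N : Type*} [AddCommGroup N'] [AddCommGroup N]
    [Module.Free ℤ N'] [Module.Finite ℤ N']
    [Module.Free ℤ N] [Module.Finite ℤ N]
    (φ : N' →+ N) (hφ : Function.Surjective φ)
    (P : AddSubgroup N) (Q : AddSubgroup N')
    (hQP : Q ≤ P.comap φ)
    (htf : ∀ g : N' ⧸ Q, g ≠ 0 → ¬IsOfFinAddOrder g) :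
    -- well-definedness in the first variable
    (∀ a ∈ P.comap φ, ∀ q ∈ Q, ∀ m' : N' →+ ℤ, (∀ x ∈ Q, m' x = 0) →
        m' (a + q) = m' a) ∧
    -- well-definedness in the second variable
    (∀ a ∈ P.comap φ, ∀ m' : N' →+ ℤ, (∀ x ∈ Q, m' x = 0) →
        ∀ u : N →+ ℤ, (∀ y ∈ P, u y = 0) → (m' + u.comp φ) a = m' a) ∧
    -- nondegeneracy in the first variable
    (∀ a ∈ P.comap φ, (∀ m' : N' →+ ℤ, (∀ x ∈ Q, m' x = 0) → m' a = 0) →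
        a ∈ Q) ∧
    -- nondegeneracy in the second variable
    (∀ m' : N' →+ ℤ, (∀ x ∈ Q, m' x = 0) → (∀ a ∈ P.comap φ, m' a = 0) →
        ∃ u : N →+ ℤ, (∀ y ∈ P, u y = 0) ∧ m' = u.comp φ) := by
  refine ⟨?_, ?_, ?_, ?_⟩
  · intro a ha q hq m' hm'
    rw [map_add, hm' q hq, add_zero]
  · intro a ha m' hm' u hu
    simp only [AddMonoidHom.add_apply, AddMonoidHom.comp_apply]
    rw [hu (φ a) ha, add_zero]
  · -- nondegeneracy in a
    intro a ha hall
    -- saturation: n • x ∈ Q, n ≠ 0 → x ∈ Q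
    have hsat : ∀ (n : ℤ) (x : N'), n ≠ 0 → n • x ∈ Q → x ∈ Q := by
      intro n x hn hnx
      by_contra hx
      have hy : (QuotientAddGroup.mk x : N' ⧸ Q) ≠ 0 := by
        simpa [QuotientAddGroup.eq_zero_iff] using hx
      apply htf _ hy
      rw [isOfFinAddOrder_iff_zsmul_eq_zero]
      exact ⟨n, hn, by
        rw [← QuotientAddGroup.mk_zsmul, QuotientAddGroup.eq_zero_iff]
        exact hnx⟩
    set q : Submodule ℤ N' := AddSubgroup.toIntSubmodule Q with hq
    haveI : NoZeroSMulDivisors ℤ (N' ⧸ q) := by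
      constructor
      intro n v hv
      by_cases hn : n = 0
      · exact Or.inl hn
      · refine Or.inr ?_
        obtain ⟨x, rfl⟩ := Submodule.Quotient.mk_surjective q v
        rw [← Submodule.Quotient.mk_smul, Submodule.Quotient.mk_eq_zero] at hv
        rw [Submodule.Quotient.mk_eq_zero]
        exact hsat n x hn hv
    haveI : Module.Free ℤ (N' ⧸ q) := Module.free_of_finite_type_torsion_free'
    by_contra haQ
    set b := Module.Free.chooseBasis ℤ (N' ⧸ q)
    have hne : (Submodule.Quotient.mk a : N' ⧸ q) ≠ 0 :=
      fun h => haQ ((Submodule.Quotient.mk_eq_zero q).1 h)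
    have : ∃ i, b.repr (Submodule.Quotient.mk a) i ≠ 0 := by
      by_contra h
      push_neg at h
      apply hne
      have : b.repr (Submodule.Quotient.mk a) = 0 := Finsupp.ext h
      simpa [this] using (b.repr.symm_apply_apply (Submodule.Quotient.mk a)).symm
    obtain ⟨i, hi⟩ := this
    set f : N' →ₗ[ℤ] ℤ := (b.coord i).comp q.mkQ
    apply hi
    have := hall f.toAddMonoidHom (by
      intro x hx
      simp only [f, LinearMap.toAddMonoidHom_coe, LinearMap.comp_apply, Submodule.mkQ_apply]
      rw [show (Submodule.Quotient.mk x : N' ⧸ q) = 0 from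
        (Submodule.Quotient.mk_eq_zero q).2 hx]
      simp)
    simpa [f, Module.Basis.coord_apply] using this
  · intro m' hm' hall
    have hker : ∀ x ∈ φ.ker, m' x = 0 := by
      intro x hx
      apply hall
      simp only [AddSubgroup.mem_comap]
      rw [AddMonoidHom.mem_ker] at hx
      rw [hx]; exact P.zero_mem
    set e := QuotientAddGroup.quotientKerEquivOfSurjective φ hφ
    set u : N →+ ℤ :=
      (QuotientAddGroup.lift φ.ker m' hker).comp e.symm.toAddMonoidHom with hu
    refine ⟨u, ?_, ?_⟩
    · intro y hy
      obtain ⟨x, rfl⟩ := hφ y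
      have hx : x ∈ P.comap φ := hy
      have hes : e.symm (φ x) = QuotientAddGroup.mk x := by
        rw [AddEquiv.symm_apply_eq]
        exact (QuotientAddGroup.kerLift_mk φ x).symm
      simp only [u, AddMonoidHom.comp_apply, AddEquiv.coe_toAddMonoidHom, hes]
      exact hall x hx
    · ext x
      have hes : e.symm (φ x) = QuotientAddGroup.mk x := by
        rw [AddEquiv.symm_apply_eq]
        exact (QuotientAddGroup.kerLift_mk φ x).symm
      simp [u, hes]
      rfl
end

section
/- Let φ : V' → V be a linear map of finite-dimensional real inner product spaces with adjoint φ† : V → V', and let σ' ⊆ V' and σ ⊆ V be nonempty closed convex cones with φ(σ') ⊆ σ. Then the following are equivalent: (1) φ maps the relative interior of σ' into the relative interior of σ; (2) ⟨u, φ(v')⟩ > 0 for every u ∈ σ∨ ∖ σ⊥ and every v' in the relative interior of σ'; (3) φ†(σ∨ ∖ σ⊥) ⊆ σ'∨ ∖ σ'⊥. -/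
open RealInnerProductSpace Set Filter Topology
section Aux

variable {E : Type*} [NormedAddCommGroup E] [InnerProductSpace ℝ E]

/-- Metric characterization of the intrinsic interior. -/
lemma aux_mem_intrinsicInterior_iff {s : Set E} {x : E} :
    x ∈ intrinsicInterior ℝ s ↔
      x ∈ (affineSpan ℝ s : Set E) ∧
        ∃ ε > 0, ∀ z ∈ (affineSpan ℝ s : Set E), dist z x < ε → z ∈ s := by
  rw [mem_intrinsicInterior]
  constructor
  · rintro ⟨y, hy, rfl⟩
    refine ⟨y.2, ?_⟩
    obtain ⟨ε, hε, hball⟩ := Metric.mem_nhds_iff.mp (mem_interior_iff_mem_nhds.mp hy)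
    refine ⟨ε, hε, fun z hz hdist => ?_⟩
    have : (⟨z, hz⟩ : affineSpan ℝ s) ∈ Metric.ball y ε := by
      simpa [Metric.mem_ball, Subtype.dist_eq] using hdist
    exact hball this
  · rintro ⟨hx, ε, hε, h⟩
    refine ⟨⟨x, hx⟩, ?_, rfl⟩
    refine mem_interior_iff_mem_nhds.mpr (Metric.mem_nhds_iff.mpr ⟨ε, hε, fun z hz => ?_⟩)
    exact h z z.2 (by simpa [Metric.mem_ball, Subtype.dist_eq] using hz)

/-- If `u` is in the dual cone and vanishes on a relative interior point, it vanishes on all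
of `s`. -/
lemma aux_lemA {s : Set E} {u v : E} (hu : ∀ y ∈ s, 0 ≤ ⟪u, y⟫)
    (hv : v ∈ intrinsicInterior ℝ s) (hv0 : ⟪u, v⟫ = 0) : ∀ y ∈ s, ⟪u, y⟫ = 0 := by
  obtain ⟨hvA, ε, hε, hball⟩ := aux_mem_intrinsicInterior_iff.mp hv
  intro y hy
  set t : ℝ := ε / (2 * (‖v - y‖ + 1)) with ht
  have hvy : (0:ℝ) ≤ ‖v - y‖ := norm_nonneg _
  have htpos : 0 < t := by positivity
  set z : E := t • (v - y) + v with hz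
  have hzA : z ∈ (affineSpan ℝ s : Set E) := by
    have := AffineSubspace.smul_vsub_vadd_mem (affineSpan ℝ s) t hvA
      (subset_affineSpan ℝ s hy) hvA
    simpa [vsub_eq_sub, vadd_eq_add] using this
  have hdist : dist z v < ε := by
    have : dist z v = t * ‖v - y‖ := by
      simp [hz, dist_eq_norm, norm_smul, abs_of_pos htpos]
    rw [this]
    have h1 : t * ‖v - y‖ ≤ t * (‖v - y‖ + 1) := by nlinarith
    have h2 : t * (‖v - y‖ + 1) = ε / 2 := by
      field_simp [ht]
      rw [ht]
      linear_combination (div_mul_cancel₀ ε (by positivity : (2 * (‖v - y‖ + 1)) ≠ 0))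
    nlinarith
  have hzs : z ∈ s := hball z hzA hdist
  have hpos : (0:ℝ) ≤ ⟪u, z⟫ := hu z hzs
  have hexp : ⟪u, z⟫ = t * (⟪u, v⟫ - ⟪u, y⟫) + ⟪u, v⟫ := by
    simp [hz, inner_add_right, inner_smul_right, inner_sub_right]
  rw [hexp, hv0] at hpos
  have : ⟪u, y⟫ ≤ 0 := by nlinarith
  exact le_antisymm this (hu y hy)

lemma aux_zero_mem {s : Set E} (hne : s.Nonempty) (hcl : IsClosed s)
    (hcone : ∀ c : ℝ, 0 < c → ∀ x ∈ s, c • x ∈ s) : (0:E) ∈ s := by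
  obtain ⟨x, hx⟩ := hne
  have hmem : ∀ n : ℕ, (1 / ((n:ℝ) + 1)) • x ∈ s := fun n =>
    hcone _ (by positivity) x hx
  have htend : Tendsto (fun n : ℕ => (1 / ((n:ℝ) + 1)) • x) atTop (𝓝 ((0:ℝ) • x)) :=
    tendsto_one_div_add_atTop_nhds_zero_nat.smul_const x
  rw [zero_smul] at htend
  exact hcl.mem_of_tendsto htend (Filter.Eventually.of_forall hmem)

lemma aux_le_on_convex {F : Type*} [NormedAddCommGroup F] [NormedSpace ℝ F]
    {s : Set F} (hconv : Convex ℝ s) {f : F →L[ℝ] ℝ} {c : ℝ} {a₀ : F}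
    (ha₀ : a₀ ∈ interior s) (hf : ∀ b ∈ interior s, f b < c) {a : F} (ha : a ∈ s) :
    f a ≤ c := by
  have hmem : ∀ n : ℕ, (((n:ℝ) + 1)⁻¹) • a₀ + (1 - ((n:ℝ) + 1)⁻¹) • a ∈ interior s := by
    intro n
    refine hconv.combo_interior_self_mem_interior ha₀ ha (by positivity) ?_ (by ring)
    rw [sub_nonneg]
    apply inv_le_one_of_one_le₀
    have : (0:ℝ) ≤ (n:ℝ) := Nat.cast_nonneg n
    linarith
  have h0 : Tendsto (fun n : ℕ => ((n:ℝ) + 1)⁻¹) atTop (𝓝 0) := by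
    simpa [one_div] using tendsto_one_div_add_atTop_nhds_zero_nat (𝕜 := ℝ)
  have htend : Tendsto (fun n : ℕ => (((n:ℝ) + 1)⁻¹) • a₀ + (1 - ((n:ℝ) + 1)⁻¹) • a)
      atTop (𝓝 ((0:ℝ) • a₀ + (1 - (0:ℝ)) • a)) :=
    (h0.smul_const a₀).add ((tendsto_const_nhds.sub h0).smul_const a)
  rw [zero_smul, sub_zero, one_smul, zero_add] at htend
  exact le_of_tendsto ((f.continuous.tendsto a).comp htend)
    (Filter.Eventually.of_forall fun n => (hf _ (hmem n)).le)

end Aux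

section LemB

variable {E : Type*} [NormedAddCommGroup E] [InnerProductSpace ℝ E] [FiniteDimensional ℝ E]

lemma aux_lemB {s : Set E} (hcl : IsClosed s) (hconv : Convex ℝ s)
    (hcone : ∀ c : ℝ, 0 < c → ∀ x ∈ s, c • x ∈ s) (h0 : (0:E) ∈ s) {x : E} (hx : x ∈ s)
    (h : ∀ u : E, (∀ y ∈ s, 0 ≤ ⟪u, y⟫) → ¬(∀ y ∈ s, ⟪u, y⟫ = 0) → 0 < ⟪u, x⟫) :
    x ∈ intrinsicInterior ℝ s := by
  classical
  set S : Submodule ℝ E := Submodule.span ℝ s with hS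
  have hAS : (affineSpan ℝ s : Set E) = (S : Set E) := by
    have h1 := affineSpan_insert_zero (k := ℝ) s
    rwa [Set.insert_eq_self.mpr h0] at h1
  set τ : Set S := S.subtype ⁻¹' s with hτ
  have hτconv : Convex ℝ τ := hconv.linear_preimage S.subtype
  have hx' : x ∈ S := Submodule.subset_span hx
  set xh : S := ⟨x, hx'⟩ with hxh
  -- τ spans S
  have hspan : Submodule.span ℝ τ = (⊤ : Submodule ℝ S) := by
    apply Submodule.map_injective_of_injective S.injective_subtype
    rw [Submodule.map_span, Submodule.map_subtype_top]
    have himg : S.subtype '' τ = s := by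
      rw [hτ, Set.image_preimage_eq_inter_range]
      have : Set.range S.subtype = (S : Set E) := Subtype.range_coe
      rw [this]
      exact Set.inter_eq_left.mpr (Submodule.subset_span)
    rw [himg, hS]
  have hτaff : affineSpan ℝ τ = ⊤ := by
    rw [← AffineSubspace.coe_eq_univ_iff]
    have h0τ : (0 : S) ∈ τ := by simpa [hτ] using h0
    have h1 := affineSpan_insert_zero (k := ℝ) τ
    rw [Set.insert_eq_self.mpr h0τ] at h1
    rw [h1, hspan]
    simp
  have hint : (interior τ).Nonempty := by
    rw [hτconv.interior_nonempty_iff_affineSpan_eq_top]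
    exact hτaff
  obtain ⟨a₀, ha₀⟩ := hint
  -- xh is an interior point of τ
  have hxint : xh ∈ interior τ := by
    by_contra hxint
    obtain ⟨f, hf⟩ := geometric_hahn_banach_open_point (hτconv.interior) isOpen_interior hxint
    have hle : ∀ a ∈ τ, f a ≤ f xh := fun a ha => aux_le_on_convex hτconv ha₀ hf ha
    have hxhτ : xh ∈ τ := by simpa [hτ] using hx
    have h2x : ((2:ℝ) • xh) ∈ τ := by
      have := hcone 2 two_pos x hx
      simpa [hτ] using this
    have hfx0 : f xh = 0 := by
      have h1 : (0:ℝ) ≤ f xh := by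
        have := hle 0 (by simpa [hτ] using h0)
        simpa using this
      have h2 : f ((2:ℝ) • xh) ≤ f xh := hle _ h2x
      rw [map_smul] at h2
      simp only [smul_eq_mul] at h2
      linarith
    set w : S := (InnerProductSpace.toDual ℝ S).symm f with hw
    have hwf : ∀ a : S, ⟪w, a⟫ = f a := fun a => InnerProductSpace.toDual_symm_apply
    set u : E := -(w : E) with hu
    have hinner : ∀ a : S, ⟪u, (a : E)⟫ = -(f a) := by
      intro a
      rw [hu, inner_neg_left, ← hwf a]
      rfl
    have hudual : ∀ y ∈ s, 0 ≤ ⟪u, y⟫ := by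
      intro y hy
      have hyS : y ∈ S := Submodule.subset_span hy
      have := hle ⟨y, hyS⟩ (by simpa [hτ] using hy)
      rw [hfx0] at this
      have h2 := hinner ⟨y, hyS⟩
      simp only [Submodule.coe_mk] at h2
      rw [show ⟪u, y⟫ = ⟪u, ((⟨y, hyS⟩ : S) : E)⟫ from rfl, h2]
      linarith
    have huperp : ¬(∀ y ∈ s, ⟪u, y⟫ = 0) := by
      intro hall
      have ha₀τ : a₀ ∈ τ := interior_subset ha₀
      have ha₀s : ((a₀ : E)) ∈ s := ha₀τ
      have := hall _ ha₀s
      rw [show ⟪u, (a₀ : E)⟫ = -(f a₀) from hinner a₀] at this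
      have hlt : f a₀ < f xh := hf a₀ ha₀
      rw [hfx0] at hlt
      linarith
    have hpos := h u hudual huperp
    rw [show ⟪u, x⟫ = -(f xh) from hinner xh, hfx0] at hpos
    linarith
  -- conclude
  obtain ⟨ε, hε, hball⟩ := Metric.mem_nhds_iff.mp (mem_interior_iff_mem_nhds.mp hxint)
  refine aux_mem_intrinsicInterior_iff.mpr ⟨by rw [hAS]; exact hx', ε, hε, ?_⟩
  intro z hz hdist
  rw [hAS] at hz
  have : (⟨z, hz⟩ : S) ∈ Metric.ball xh ε := by
    simpa [Metric.mem_ball, Subtype.dist_eq] using hdist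
  exact hball this

end LemB

open RealInnerProductSpace

/-- The chain of equivalences from Section 2.1 ("Dual picture via polytopes"):
for a linear map `φ : V' → V` with adjoint `φ†` and nonempty closed convex cones
`σ' ⊆ V'`, `σ ⊆ V` with `φ(σ') ⊆ σ`, the following are equivalent:
(1) `φ` maps the relative interior of `σ'` into the relative interior of `σ`;
(2) `⟪u, φ v'⟫ > 0` for all `u ∈ σ∨ ∖ σ⊥` and all `v'` in the relative interior of `σ'`;
(3) `φ†(σ∨ ∖ σ⊥) ⊆ σ'∨ ∖ σ'⊥`. -/
theorem stmt_6 {V' V : Type*}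
    [NormedAddCommGroup V'] [InnerProductSpace ℝ V'] [FiniteDimensional ℝ V']
    [NormedAddCommGroup V] [InnerProductSpace ℝ V] [FiniteDimensional ℝ V]
    (φ : V' →ₗ[ℝ] V) (σ' : Set V') (σ : Set V)
    (hne' : σ'.Nonempty) (hcl' : IsClosed σ') (hconv' : Convex ℝ σ')
    (hcone' : ∀ c : ℝ, 0 < c → ∀ x ∈ σ', c • x ∈ σ')
    (hne : σ.Nonempty) (hcl : IsClosed σ) (hconv : Convex ℝ σ)
    (hcone : ∀ c : ℝ, 0 < c → ∀ x ∈ σ, c • x ∈ σ)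
    (hmap : ∀ x ∈ σ', φ x ∈ σ) :
    (Set.MapsTo φ (intrinsicInterior ℝ σ') (intrinsicInterior ℝ σ) ↔
      ∀ u : V, (∀ y ∈ σ, 0 ≤ ⟪u, y⟫) → ¬(∀ y ∈ σ, ⟪u, y⟫ = 0) →
        ∀ v' ∈ intrinsicInterior ℝ σ', 0 < ⟪u, φ v'⟫) ∧
    (Set.MapsTo φ (intrinsicInterior ℝ σ') (intrinsicInterior ℝ σ) ↔
      ∀ u : V, (∀ y ∈ σ, 0 ≤ ⟪u, y⟫) → ¬(∀ y ∈ σ, ⟪u, y⟫ = 0) →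
        ((∀ y ∈ σ', 0 ≤ ⟪LinearMap.adjoint φ u, y⟫) ∧
          ¬(∀ y ∈ σ', ⟪LinearMap.adjoint φ u, y⟫ = 0))) := by
  have h0 : (0:V) ∈ σ := aux_zero_mem hne hcl hcone
  -- (1) → (2)
  have h12 : Set.MapsTo φ (intrinsicInterior ℝ σ') (intrinsicInterior ℝ σ) →
      ∀ u : V, (∀ y ∈ σ, 0 ≤ ⟪u, y⟫) → ¬(∀ y ∈ σ, ⟪u, y⟫ = 0) →
        ∀ v' ∈ intrinsicInterior ℝ σ', 0 < ⟪u, φ v'⟫ := by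
    intro h1 u hu hunot v' hv'
    have hφv' : φ v' ∈ intrinsicInterior ℝ σ := h1 hv'
    have hge : 0 ≤ ⟪u, φ v'⟫ := hu _ (intrinsicInterior_subset hφv')
    rcases hge.lt_or_eq with hlt | heq
    · exact hlt
    · exact absurd (aux_lemA hu hφv' heq.symm) hunot
  -- (2) → (1)
  have h21 : (∀ u : V, (∀ y ∈ σ, 0 ≤ ⟪u, y⟫) → ¬(∀ y ∈ σ, ⟪u, y⟫ = 0) →
        ∀ v' ∈ intrinsicInterior ℝ σ', 0 < ⟪u, φ v'⟫) →
      Set.MapsTo φ (intrinsicInterior ℝ σ') (intrinsicInterior ℝ σ) := by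
    intro h2 v' hv'
    exact aux_lemB hcl hconv hcone h0 (hmap _ (intrinsicInterior_subset hv'))
      (fun u hu hunot => h2 u hu hunot v' hv')
  have hiff1 : Set.MapsTo φ (intrinsicInterior ℝ σ') (intrinsicInterior ℝ σ) ↔
      ∀ u : V, (∀ y ∈ σ, 0 ≤ ⟪u, y⟫) → ¬(∀ y ∈ σ, ⟪u, y⟫ = 0) →
        ∀ v' ∈ intrinsicInterior ℝ σ', 0 < ⟪u, φ v'⟫ := ⟨h12, h21⟩
  refine ⟨hiff1, hiff1.trans ?_⟩
  have hadj : ∀ (u : V) (y : V'), ⟪LinearMap.adjoint φ u, y⟫ = ⟪u, φ y⟫ := fun u y =>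
    LinearMap.adjoint_inner_left φ y u
  constructor
  · -- (2) → (3)
    intro h2 u hu hunot
    obtain ⟨v', hv'⟩ := Set.Nonempty.intrinsicInterior hconv' hne'
    refine ⟨fun y hy => by rw [hadj]; exact hu _ (hmap y hy), fun hall => ?_⟩
    have := hall v' (intrinsicInterior_subset hv')
    rw [hadj] at this
    exact (h2 u hu hunot v' hv').ne' this
  · -- (3) → (2)
    intro h3 u hu hunot v' hv'
    obtain ⟨hdual, hnperp⟩ := h3 u hu hunot
    have hge : 0 ≤ ⟪u, φ v'⟫ := by
      have := hdual v' (intrinsicInterior_subset hv')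
      rwa [hadj] at this
    rcases hge.lt_or_eq with hlt | heq
    · exact hlt
    · exfalso
      apply hnperp
      refine aux_lemA hdual hv' ?_
      rw [hadj]
      exact heq.symm
end

section
/- Let Δ' ⊂ ℝ⁵ be the convex hull of the 14 lattice points m'₁ = (-22,-14,4,1,1), m'₂ = (-22,6,4,1,1), m'₃ = (-10,-6,2,-1,1), m'₄ = (-10,2,2,-1,1), m'₅ = (-6,-6,0,1,1), m'₆ = (0,0,0,-2,1), m'₇ = (0,0,0,1,-1), m'₈ = (2,-6,2,-1,1), m'₉ = (2,2,2,-1,1), m'₁₀ = (6,-14,4,1,1), m'₁₁ = (6,-6,0,1,1), m'₁₂ = (6,3,-3,1,1), m'₁₃ = (6,6,-3,1,1), m'₁₄ = (6,6,4,1,1). Then the polar dual set {y ∈ ℝ⁵ : ⟨x, y⟩ ≥ -1 for all x ∈ Δ'} equals the convex hull of the 9 lattice points v'₁ = (-1,0,0,2,3), v'₂ = (0,-1,0,2,3), c'₁ = (0,0,-1,2,3), c'₂ = (0,0,-1,1,2), v'₄ = (0,0,0,-1,0), v'₅ = (0,0,0,0,-1), f' = (0,1,2,2,3), g' = (0,1,3,2,3),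 v'₆ = (1,0,4,2,3); in particular, Δ' is a reflexive polytope (it and its polar dual are both convex hulls of finitely many points of ℤ⁵ and contain the origin in their interiors). -/
/-- The 14 vertices of the reflexive polytope `Δ'` of [B-C-dlO-G]
(Examples 2.2.2 and 4.2.1). -/
noncomputable def mVerts : Fin 14 → (Fin 5 → ℝ) :=
  ![![-22, -14, 4, 1, 1], ![-22, 6, 4, 1, 1], ![-10, -6, 2, -1, 1],
    ![-10, 2, 2, -1, 1], ![-6, -6, 0, 1, 1], ![0, 0, 0, -2, 1],
    ![0, 0, 0, 1, -1], ![2, -6, 2, -1, 1], ![2, 2, 2, -1, 1],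
    ![6, -14, 4, 1, 1], ![6, -6, 0, 1, 1], ![6, 3, -3, 1, 1],
    ![6, 6, -3, 1, 1], ![6, 6, 4, 1, 1]]

/-- The 9 vertices of the dual reflexive polytope `Δ'∗`. -/
noncomputable def vVerts : Fin 9 → (Fin 5 → ℝ) :=
  ![![-1, 0, 0, 2, 3], ![0, -1, 0, 2, 3], ![0, 0, -1, 2, 3],
    ![0, 0, -1, 1, 2], ![0, 0, 0, -1, 0], ![0, 0, 0, 0, -1],
    ![0, 1, 2, 2, 3], ![0, 1, 3, 2, 3], ![1, 0, 4, 2, 3]]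

private lemma sum_nine {M : Type*} [AddCommMonoid M] (f : Fin 9 → M) :
    ∑ i, f i = f 0 + f 1 + f 2 + f 3 + f 4 + f 5 + f 6 + f 7 + f 8 := by
  rw [Fin.sum_univ_castSucc, Fin.sum_univ_eight]
  rfl

private lemma sum_fourteen {M : Type*} [AddCommMonoid M] (f : Fin 14 → M) :
    ∑ i, f i = f 0 + f 1 + f 2 + f 3 + f 4 + f 5 + f 6 + f 7 + f 8 + f 9 + f 10 + f 11
      + f 12 + f 13 := by
  rw [Fin.sum_univ_castSucc, Fin.sum_univ_castSucc, Fin.sum_univ_castSucc,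
    Fin.sum_univ_castSucc, Fin.sum_univ_castSucc, Fin.sum_univ_castSucc, Fin.sum_univ_eight]
  rfl

set_option maxHeartbeats 2000000 in
private lemma memV_aux (y : Fin 5 → ℝ) (w0 w1 w2 w3 w4 w5 w6 w7 w8 : ℝ)
    (n0 : 0 ≤ w0) (n1 : 0 ≤ w1) (n2 : 0 ≤ w2) (n3 : 0 ≤ w3) (n4 : 0 ≤ w4) (n5 : 0 ≤ w5) (n6 : 0 ≤ w6) (n7 : 0 ≤ w7) (n8 : 0 ≤ w8)
    (hsum : w0 + w1 + w2 + w3 + w4 + w5 + w6 + w7 + w8 = 1)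
    (e0 : (-1) * w0 + (0) * w1 + (0) * w2 + (0) * w3 + (0) * w4 + (0) * w5 + (0) * w6 + (0) * w7 + (1) * w8 = y 0)
    (e1 : (0) * w0 + (-1) * w1 + (0) * w2 + (0) * w3 + (0) * w4 + (0) * w5 + (1) * w6 + (1) * w7 + (0) * w8 = y 1)
    (e2 : (0) * w0 + (0) * w1 + (-1) * w2 + (-1) * w3 + (0) * w4 + (0) * w5 + (2) * w6 + (3) * w7 + (4) * w8 = y 2)
    (e3 : (2) * w0 + (2) * w1 + (2) * w2 + (1) * w3 + (-1) * w4 + (0) * w5 + (2) * w6 + (2) * w7 + (2) * w8 = y 3)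
    (e4 : (3) * w0 + (3) * w1 + (3) * w2 + (2) * w3 + (0) * w4 + (-1) * w5 + (3) * w6 + (3) * w7 + (3) * w8 = y 4)
    : y ∈ convexHull ℝ (Set.range vVerts) := by
  have hS : w0 • vVerts 0 + w1 • vVerts 1 + w2 • vVerts 2 + w3 • vVerts 3 + w4 • vVerts 4 + w5 • vVerts 5 + w6 • vVerts 6 + w7 • vVerts 7 + w8 • vVerts 8 = y := by
    funext i
    fin_cases i
    · show w0 * (-1) + w1 * 0 + w2 * 0 + w3 * 0 + w4 * 0 + w5 * 0 + w6 * 0 + w7 * 0 + w8 * 1 = y 0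
      linarith [e0]
    · show w0 * 0 + w1 * (-1) + w2 * 0 + w3 * 0 + w4 * 0 + w5 * 0 + w6 * 1 + w7 * 1 + w8 * 0 = y 1
      linarith [e1]
    · show w0 * 0 + w1 * 0 + w2 * (-1) + w3 * (-1) + w4 * 0 + w5 * 0 + w6 * 2 + w7 * 3 + w8 * 4 = y 2
      linarith [e2]
    · show w0 * 2 + w1 * 2 + w2 * 2 + w3 * 1 + w4 * (-1) + w5 * 0 + w6 * 2 + w7 * 2 + w8 * 2 = y 3
      linarith [e3]
    · show w0 * 3 + w1 * 3 + w2 * 3 + w3 * 2 + w4 * 0 + w5 * (-1) + w6 * 3 + w7 * 3 + w8 * 3 = y 4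
      linarith [e4]
  rw [← hS]
  have hsum' : ∑ j, (![w0, w1, w2, w3, w4, w5, w6, w7, w8] : Fin 9 → ℝ) j = 1 := by
    rw [sum_nine]; exact hsum
  have hw : ∀ j ∈ (Finset.univ : Finset (Fin 9)), (0:ℝ) ≤ (![w0, w1, w2, w3, w4, w5, w6, w7, w8] : Fin 9 → ℝ) j := by
    intro j _
    fin_cases j
    · exact n0
    · exact n1
    · exact n2
    · exact n3
    · exact n4
    · exact n5
    · exact n6
    · exact n7
    · exact n8
  have hmem := (convex_convexHull ℝ (Set.range vVerts)).sum_mem hw hsum'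
    (fun j _ => subset_convexHull ℝ _ (Set.mem_range_self j))
  rw [sum_nine] at hmem
  exact hmem

set_option maxHeartbeats 2000000 in
private lemma memM_aux (y : Fin 5 → ℝ) (w0 w1 w2 w3 w4 w5 w6 w7 w8 w9 w10 w11 w12 w13 : ℝ)
    (n0 : 0 ≤ w0) (n1 : 0 ≤ w1) (n2 : 0 ≤ w2) (n3 : 0 ≤ w3) (n4 : 0 ≤ w4) (n5 : 0 ≤ w5) (n6 : 0 ≤ w6) (n7 : 0 ≤ w7) (n8 : 0 ≤ w8) (n9 : 0 ≤ w9) (n10 : 0 ≤ w10) (n11 : 0 ≤ w11) (n12 : 0 ≤ w12) (n13 : 0 ≤ w13)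
    (hsum : w0 + w1 + w2 + w3 + w4 + w5 + w6 + w7 + w8 + w9 + w10 + w11 + w12 + w13 = 1)
    (e0 : (-22) * w0 + (-22) * w1 + (-10) * w2 + (-10) * w3 + (-6) * w4 + (0) * w5 + (0) * w6 + (2) * w7 + (2) * w8 + (6) * w9 + (6) * w10 + (6) * w11 + (6) * w12 + (6) * w13 = y 0)
    (e1 : (-14) * w0 + (6) * w1 + (-6) * w2 + (2) * w3 + (-6) * w4 + (0) * w5 + (0) * w6 + (-6) * w7 + (2) * w8 + (-14) * w9 + (-6) * w10 + (3) * w11 + (6) * w12 + (6) * w13 = y 1)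
    (e2 : (4) * w0 + (4) * w1 + (2) * w2 + (2) * w3 + (0) * w4 + (0) * w5 + (0) * w6 + (2) * w7 + (2) * w8 + (4) * w9 + (0) * w10 + (-3) * w11 + (-3) * w12 + (4) * w13 = y 2)
    (e3 : (1) * w0 + (1) * w1 + (-1) * w2 + (-1) * w3 + (1) * w4 + (-2) * w5 + (1) * w6 + (-1) * w7 + (-1) * w8 + (1) * w9 + (1) * w10 + (1) * w11 + (1) * w12 + (1) * w13 = y 3)
    (e4 : (1) * w0 + (1) * w1 + (1) * w2 + (1) * w3 + (1) * w4 + (1) * w5 + (-1) * w6 + (1) * w7 + (1) * w8 + (1) * w9 + (1) * w10 + (1) * w11 + (1) * w12 + (1) * w13 = y 4)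
    : y ∈ convexHull ℝ (Set.range mVerts) := by
  have hS : w0 • mVerts 0 + w1 • mVerts 1 + w2 • mVerts 2 + w3 • mVerts 3 + w4 • mVerts 4 + w5 • mVerts 5 + w6 • mVerts 6 + w7 • mVerts 7 + w8 • mVerts 8 + w9 • mVerts 9 + w10 • mVerts 10 + w11 • mVerts 11 + w12 • mVerts 12 + w13 • mVerts 13 = y := by
    funext i
    fin_cases i
    · show w0 * (-22) + w1 * (-22) + w2 * (-10) + w3 * (-10) + w4 * (-6) + w5 * 0 + w6 * 0 + w7 * 2 + w8 * 2 + w9 * 6 + w10 * 6 + w11 * 6 + w12 * 6 + w13 * 6 = y 0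
      linarith [e0]
    · show w0 * (-14) + w1 * 6 + w2 * (-6) + w3 * 2 + w4 * (-6) + w5 * 0 + w6 * 0 + w7 * (-6) + w8 * 2 + w9 * (-14) + w10 * (-6) + w11 * 3 + w12 * 6 + w13 * 6 = y 1
      linarith [e1]
    · show w0 * 4 + w1 * 4 + w2 * 2 + w3 * 2 + w4 * 0 + w5 * 0 + w6 * 0 + w7 * 2 + w8 * 2 + w9 * 4 + w10 * 0 + w11 * (-3) + w12 * (-3) + w13 * 4 = y 2
      linarith [e2]
    · show w0 * 1 + w1 * 1 + w2 * (-1) + w3 * (-1) + w4 * 1 + w5 * (-2) + w6 * 1 + w7 * (-1) + w8 * (-1) + w9 * 1 + w10 * 1 + w11 * 1 + w12 * 1 + w13 * 1 = y 3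
      linarith [e3]
    · show w0 * 1 + w1 * 1 + w2 * 1 + w3 * 1 + w4 * 1 + w5 * 1 + w6 * (-1) + w7 * 1 + w8 * 1 + w9 * 1 + w10 * 1 + w11 * 1 + w12 * 1 + w13 * 1 = y 4
      linarith [e4]
  rw [← hS]
  have hsum' : ∑ j, (![w0, w1, w2, w3, w4, w5, w6, w7, w8, w9, w10, w11, w12, w13] : Fin 14 → ℝ) j = 1 := by
    rw [sum_fourteen]; exact hsum
  have hw : ∀ j ∈ (Finset.univ : Finset (Fin 14)), (0:ℝ) ≤ (![w0, w1, w2, w3, w4, w5, w6, w7, w8, w9, w10, w11, w12, w13] : Fin 14 → ℝ) j := by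
    intro j _
    fin_cases j
    · exact n0
    · exact n1
    · exact n2
    · exact n3
    · exact n4
    · exact n5
    · exact n6
    · exact n7
    · exact n8
    · exact n9
    · exact n10
    · exact n11
    · exact n12
    · exact n13
  have hmem := (convex_convexHull ℝ (Set.range mVerts)).sum_mem hw hsum'
    (fun j _ => subset_convexHull ℝ _ (Set.mem_range_self j))
  rw [sum_fourteen] at hmem
  exact hmem

set_option maxHeartbeats 2000000 in
private lemma hard (y : Fin 5 → ℝ) (h : ∀ i : Fin 14, -1 ≤ ∑ k, mVerts i k * y k) :
    y ∈ convexHull ℝ (Set.range vVerts) := by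
  have h0 : (-1:ℝ) ≤ (-22) * y 0 + (-14) * y 1 + 4 * y 2 + 1 * y 3 + 1 * y 4 := by
    have t := h 0
    rw [Fin.sum_univ_five] at t
    exact t
  have h1 : (-1:ℝ) ≤ (-22) * y 0 + 6 * y 1 + 4 * y 2 + 1 * y 3 + 1 * y 4 := by
    have t := h 1
    rw [Fin.sum_univ_five] at t
    exact t
  have h2 : (-1:ℝ) ≤ (-10) * y 0 + (-6) * y 1 + 2 * y 2 + (-1) * y 3 + 1 * y 4 := by
    have t := h 2
    rw [Fin.sum_univ_five] at t
    exact t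
  have h3 : (-1:ℝ) ≤ (-10) * y 0 + 2 * y 1 + 2 * y 2 + (-1) * y 3 + 1 * y 4 := by
    have t := h 3
    rw [Fin.sum_univ_five] at t
    exact t
  have h4 : (-1:ℝ) ≤ (-6) * y 0 + (-6) * y 1 + 0 * y 2 + 1 * y 3 + 1 * y 4 := by
    have t := h 4
    rw [Fin.sum_univ_five] at t
    exact t
  have h5 : (-1:ℝ) ≤ 0 * y 0 + 0 * y 1 + 0 * y 2 + (-2) * y 3 + 1 * y 4 := by
    have t := h 5
    rw [Fin.sum_univ_five] at t
    exact t
  have h6 : (-1:ℝ) ≤ 0 * y 0 + 0 * y 1 + 0 * y 2 + 1 * y 3 + (-1) * y 4 := by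
    have t := h 6
    rw [Fin.sum_univ_five] at t
    exact t
  have h7 : (-1:ℝ) ≤ 2 * y 0 + (-6) * y 1 + 2 * y 2 + (-1) * y 3 + 1 * y 4 := by
    have t := h 7
    rw [Fin.sum_univ_five] at t
    exact t
  have h8 : (-1:ℝ) ≤ 2 * y 0 + 2 * y 1 + 2 * y 2 + (-1) * y 3 + 1 * y 4 := by
    have t := h 8
    rw [Fin.sum_univ_five] at t
    exact t
  have h9 : (-1:ℝ) ≤ 6 * y 0 + (-14) * y 1 + 4 * y 2 + 1 * y 3 + 1 * y 4 := by
    have t := h 9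
    rw [Fin.sum_univ_five] at t
    exact t
  have h10 : (-1:ℝ) ≤ 6 * y 0 + (-6) * y 1 + 0 * y 2 + 1 * y 3 + 1 * y 4 := by
    have t := h 10
    rw [Fin.sum_univ_five] at t
    exact t
  have h11 : (-1:ℝ) ≤ 6 * y 0 + 3 * y 1 + (-3) * y 2 + 1 * y 3 + 1 * y 4 := by
    have t := h 11
    rw [Fin.sum_univ_five] at t
    exact t
  have h12 : (-1:ℝ) ≤ 6 * y 0 + 6 * y 1 + (-3) * y 2 + 1 * y 3 + 1 * y 4 := by
    have t := h 12
    rw [Fin.sum_univ_five] at t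
    exact t
  have h13 : (-1:ℝ) ≤ 6 * y 0 + 6 * y 1 + 4 * y 2 + 1 * y 3 + 1 * y 4 := by
    have t := h 13
    rw [Fin.sum_univ_five] at t
    exact t
  rcases le_or_gt 0 ((1) + (-1) * y 0 + (0) * y 1 + ((1)/2) * y 2 + ((-5)/2) * y 3 + (1) * y 4) with hs1 | hs1
  · rcases le_or_gt 0 ((-1) + (1) * y 0 + (1) * y 1 + ((-1)/2) * y 2 + ((5)/2) * y 3 + (-1) * y 4) with hs2 | hs2
    · rcases le_or_gt 0 ((-1) + (-6) * y 0 + (0) * y 1 + (3) * y 2 + (-1) * y 3 + (-1) * y 4) with hs3 | hs3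
      · exact memV_aux y
          (((1)/12) + ((-1)/2) * y 0 + ((-1)/2) * y 1 + (0) * y 2 + ((1)/12) * y 3 + ((1)/12) * y 4)
          (0:ℝ)
          (0:ℝ)
          (0:ℝ)
          (((1)/3) + (0) * y 0 + (0) * y 1 + (0) * y 2 + ((-2)/3) * y 3 + ((1)/3) * y 4)
          (((1)/2) + (0) * y 0 + (0) * y 1 + (0) * y 2 + ((1)/2) * y 3 + ((-1)/2) * y 4)
          (((1)/3) + (2) * y 0 + (1) * y 1 + (-1) * y 2 + ((1)/3) * y 3 + ((1)/3) * y 4)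
          (((-1)/3) + (-2) * y 0 + (0) * y 1 + (1) * y 2 + ((-1)/3) * y 3 + ((-1)/3) * y 4)
          (((1)/12) + ((1)/2) * y 0 + ((-1)/2) * y 1 + (0) * y 2 + ((1)/12) * y 3 + ((1)/12) * y 4)
          (by linarith)
          (by norm_num)
          (by norm_num)
          (by norm_num)
          (by linarith)
          (by linarith)
          (by linarith)
          (by linarith)
          (by linarith)
          (by ring)
          (by ring)
          (by ring)
          (by ring)
          (by ring)
          (by ring)
      · exact memV_aux y
          (((1)/28) + ((-11)/14) * y 0 + ((-1)/2) * y 1 + ((1)/7) * y 2 + ((1)/28) * y 3 + ((1)/28) * y 4)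
          (0:ℝ)
          (0:ℝ)
          (((1)/7) + ((6)/7) * y 0 + (0) * y 1 + ((-3)/7) * y 2 + ((1)/7) * y 3 + ((1)/7) * y 4)
          (((2)/7) + ((-2)/7) * y 0 + (0) * y 1 + ((1)/7) * y 2 + ((-5)/7) * y 3 + ((2)/7) * y 4)
          (((1)/2) + (0) * y 0 + (0) * y 1 + (0) * y 2 + ((1)/2) * y 3 + ((-1)/2) * y 4)
          ((0) + (0) * y 0 + (1) * y 1 + (0) * y 2 + (0) * y 3 + (0) * y 4)
          (0:ℝ)
          (((1)/28) + ((3)/14) * y 0 + ((-1)/2) * y 1 + ((1)/7) * y 2 + ((1)/28) * y 3 + ((1)/28) * y 4)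
          (by linarith)
          (by norm_num)
          (by norm_num)
          (by linarith)
          (by linarith)
          (by linarith)
          (by linarith)
          (by norm_num)
          (by linarith)
          (by ring)
          (by ring)
          (by ring)
          (by ring)
          (by ring)
          (by ring)
    · rcases le_or_gt 0 ((0) + (0) * y 0 + (-1) * y 1 + (0) * y 2 + (0) * y 3 + (0) * y 4) with hs4 | hs4
      · exact memV_aux y
          (((1)/28) + ((-11)/14) * y 0 + ((3)/14) * y 1 + ((1)/7) * y 2 + ((1)/28) * y 3 + ((1)/28) * y 4)
          ((0) + (0) * y 0 + (-1) * y 1 + (0) * y 2 + (0) * y 3 + (0) * y 4)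
          (0:ℝ)
          (((1)/7) + ((6)/7) * y 0 + ((6)/7) * y 1 + ((-3)/7) * y 2 + ((1)/7) * y 3 + ((1)/7) * y 4)
          (((2)/7) + ((-2)/7) * y 0 + ((-2)/7) * y 1 + ((1)/7) * y 2 + ((-5)/7) * y 3 + ((2)/7) * y 4)
          (((1)/2) + (0) * y 0 + (0) * y 1 + (0) * y 2 + ((1)/2) * y 3 + ((-1)/2) * y 4)
          (0:ℝ)
          (0:ℝ)
          (((1)/28) + ((3)/14) * y 0 + ((3)/14) * y 1 + ((1)/7) * y 2 + ((1)/28) * y 3 + ((1)/28) * y 4)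
          (by linarith)
          (by linarith)
          (by norm_num)
          (by linarith)
          (by linarith)
          (by linarith)
          (by norm_num)
          (by norm_num)
          (by linarith)
          (by ring)
          (by ring)
          (by ring)
          (by ring)
          (by ring)
          (by ring)
      · rcases le_or_gt 0 ((-1) + (-6) * y 0 + (0) * y 1 + (3) * y 2 + (-1) * y 3 + (-1) * y 4) with hs5 | hs5
        · exact memV_aux y
            (((1)/12) + ((-1)/2) * y 0 + ((-1)/2) * y 1 + (0) * y 2 + ((1)/12) * y 3 + ((1)/12) * y 4)
            (0:ℝ)
            (0:ℝ)
            (0:ℝ)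
            (((1)/3) + (0) * y 0 + (0) * y 1 + (0) * y 2 + ((-2)/3) * y 3 + ((1)/3) * y 4)
            (((1)/2) + (0) * y 0 + (0) * y 1 + (0) * y 2 + ((1)/2) * y 3 + ((-1)/2) * y 4)
            (((1)/3) + (2) * y 0 + (1) * y 1 + (-1) * y 2 + ((1)/3) * y 3 + ((1)/3) * y 4)
            (((-1)/3) + (-2) * y 0 + (0) * y 1 + (1) * y 2 + ((-1)/3) * y 3 + ((-1)/3) * y 4)
            (((1)/12) + ((1)/2) * y 0 + ((-1)/2) * y 1 + (0) * y 2 + ((1)/12) * y 3 + ((1)/12) * y 4)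
            (by linarith)
            (by norm_num)
            (by norm_num)
            (by norm_num)
            (by linarith)
            (by linarith)
            (by linarith)
            (by linarith)
            (by linarith)
            (by ring)
            (by ring)
            (by ring)
            (by ring)
            (by ring)
            (by ring)
        · exact memV_aux y
            (((1)/28) + ((-11)/14) * y 0 + ((-1)/2) * y 1 + ((1)/7) * y 2 + ((1)/28) * y 3 + ((1)/28) * y 4)
            (0:ℝ)
            (0:ℝ)
            (((1)/7) + ((6)/7) * y 0 + (0) * y 1 + ((-3)/7) * y 2 + ((1)/7) * y 3 + ((1)/7) * y 4)
            (((2)/7) + ((-2)/7) * y 0 + (0) * y 1 + ((1)/7) * y 2 + ((-5)/7) * y 3 + ((2)/7) * y 4)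
            (((1)/2) + (0) * y 0 + (0) * y 1 + (0) * y 2 + ((1)/2) * y 3 + ((-1)/2) * y 4)
            ((0) + (0) * y 0 + (1) * y 1 + (0) * y 2 + (0) * y 3 + (0) * y 4)
            (0:ℝ)
            (((1)/28) + ((3)/14) * y 0 + ((-1)/2) * y 1 + ((1)/7) * y 2 + ((1)/28) * y 3 + ((1)/28) * y 4)
            (by linarith)
            (by norm_num)
            (by norm_num)
            (by linarith)
            (by linarith)
            (by linarith)
            (by linarith)
            (by norm_num)
            (by linarith)
            (by ring)
            (by ring)
            (by ring)
            (by ring)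
            (by ring)
            (by ring)
  · rcases le_or_gt 0 ((0) + (0) * y 0 + (-1) * y 1 + (0) * y 2 + (0) * y 3 + (0) * y 4) with hs6 | hs6
    · rcases le_or_gt 0 ((-1) + (1) * y 0 + (1) * y 1 + ((-1)/2) * y 2 + ((5)/2) * y 3 + (-1) * y 4) with hs7 | hs7
      · exact memV_aux y
          (((1)/12) + ((-5)/6) * y 0 + ((1)/6) * y 1 + ((1)/6) * y 2 + ((-1)/12) * y 3 + ((1)/12) * y 4)
          ((0) + (0) * y 0 + (-1) * y 1 + (0) * y 2 + (0) * y 3 + (0) * y 4)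
          (((-2)/3) + ((2)/3) * y 0 + ((2)/3) * y 1 + ((-1)/3) * y 2 + ((5)/3) * y 3 + ((-2)/3) * y 4)
          ((1) + (0) * y 0 + (0) * y 1 + (0) * y 2 + (-2) * y 3 + (1) * y 4)
          (0:ℝ)
          (((1)/2) + (0) * y 0 + (0) * y 1 + (0) * y 2 + ((1)/2) * y 3 + ((-1)/2) * y 4)
          (0:ℝ)
          (0:ℝ)
          (((1)/12) + ((1)/6) * y 0 + ((1)/6) * y 1 + ((1)/6) * y 2 + ((-1)/12) * y 3 + ((1)/12) * y 4)
          (by linarith)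
          (by linarith)
          (by linarith)
          (by linarith)
          (by norm_num)
          (by linarith)
          (by norm_num)
          (by norm_num)
          (by linarith)
          (by ring)
          (by ring)
          (by ring)
          (by ring)
          (by ring)
          (by ring)
      · exact memV_aux y
          (((1)/28) + ((-11)/14) * y 0 + ((3)/14) * y 1 + ((1)/7) * y 2 + ((1)/28) * y 3 + ((1)/28) * y 4)
          ((0) + (0) * y 0 + (-1) * y 1 + (0) * y 2 + (0) * y 3 + (0) * y 4)
          (0:ℝ)
          (((1)/7) + ((6)/7) * y 0 + ((6)/7) * y 1 + ((-3)/7) * y 2 + ((1)/7) * y 3 + ((1)/7) * y 4)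
          (((2)/7) + ((-2)/7) * y 0 + ((-2)/7) * y 1 + ((1)/7) * y 2 + ((-5)/7) * y 3 + ((2)/7) * y 4)
          (((1)/2) + (0) * y 0 + (0) * y 1 + (0) * y 2 + ((1)/2) * y 3 + ((-1)/2) * y 4)
          (0:ℝ)
          (0:ℝ)
          (((1)/28) + ((3)/14) * y 0 + ((3)/14) * y 1 + ((1)/7) * y 2 + ((1)/28) * y 3 + ((1)/28) * y 4)
          (by linarith)
          (by linarith)
          (by norm_num)
          (by linarith)
          (by linarith)
          (by linarith)
          (by norm_num)
          (by norm_num)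
          (by linarith)
          (by ring)
          (by ring)
          (by ring)
          (by ring)
          (by ring)
          (by ring)
    · exact memV_aux y
        (((1)/12) + ((-5)/6) * y 0 + ((-1)/2) * y 1 + ((1)/6) * y 2 + ((-1)/12) * y 3 + ((1)/12) * y 4)
        (0:ℝ)
        (((-2)/3) + ((2)/3) * y 0 + (0) * y 1 + ((-1)/3) * y 2 + ((5)/3) * y 3 + ((-2)/3) * y 4)
        ((1) + (0) * y 0 + (0) * y 1 + (0) * y 2 + (-2) * y 3 + (1) * y 4)
        (0:ℝ)
        (((1)/2) + (0) * y 0 + (0) * y 1 + (0) * y 2 + ((1)/2) * y 3 + ((-1)/2) * y 4)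
        ((0) + (0) * y 0 + (1) * y 1 + (0) * y 2 + (0) * y 3 + (0) * y 4)
        (0:ℝ)
        (((1)/12) + ((1)/6) * y 0 + ((-1)/2) * y 1 + ((1)/6) * y 2 + ((-1)/12) * y 3 + ((1)/12) * y 4)
        (by linarith)
        (by norm_num)
        (by linarith)
        (by linarith)
        (by norm_num)
        (by linarith)
        (by linarith)
        (by norm_num)
        (by linarith)
        (by ring)
        (by ring)
        (by ring)
        (by ring)
        (by ring)
        (by ring)

private lemma convex_hs (c : Fin 5 → ℝ) :
    Convex ℝ {x : Fin 5 → ℝ | -1 ≤ ∑ k, x k * c k} := by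
  intro x hx z hz a b ha hb hab
  have hx' : (-1:ℝ) ≤ ∑ k, x k * c k := hx
  have hz' : (-1:ℝ) ≤ ∑ k, z k * c k := hz
  have expand : ∑ k, (a • x + b • z) k * c k
      = a * ∑ k, x k * c k + b * ∑ k, z k * c k := by
    rw [Fin.sum_univ_five, Fin.sum_univ_five, Fin.sum_univ_five]
    show (a * x 0 + b * z 0) * c 0 + (a * x 1 + b * z 1) * c 1 + (a * x 2 + b * z 2) * c 2
      + (a * x 3 + b * z 3) * c 3 + (a * x 4 + b * z 4) * c 4 = _
    ring
  show (-1:ℝ) ≤ ∑ k, (a • x + b • z) k * c k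
  rw [expand]
  nlinarith [mul_nonneg ha (show (0:ℝ) ≤ ∑ k, x k * c k + 1 by linarith),
    mul_nonneg hb (show (0:ℝ) ≤ ∑ k, z k * c k + 1 by linarith)]

private lemma key (c : Fin 5 → ℝ) (hc : ∀ i : Fin 14, -1 ≤ ∑ k, mVerts i k * c k) :
    ∀ x ∈ convexHull ℝ (Set.range mVerts), -1 ≤ ∑ k, x k * c k := by
  intro x hx
  refine convexHull_min ?_ (convex_hs c) hx
  rintro _ ⟨i, rfl⟩
  exact hc i

set_option maxHeartbeats 1000000 in
private lemma hnum : ∀ (j : Fin 9) (i : Fin 14), -1 ≤ ∑ k, mVerts i k * vVerts j k := by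
  intro j i
  fin_cases j <;> fin_cases i <;> norm_num [mVerts, vVerts, Fin.sum_univ_succ]

private lemma convex_P :
    Convex ℝ {y : Fin 5 → ℝ | ∀ x ∈ convexHull ℝ (Set.range mVerts), -1 ≤ ∑ i, x i * y i} := by
  intro y1 h1 y2 h2 a b ha hb hab
  intro x hx
  have s1 := h1 x hx
  have s2 := h2 x hx
  have expand : ∑ k, x k * (a • y1 + b • y2) k
      = a * ∑ k, x k * y1 k + b * ∑ k, x k * y2 k := by
    rw [Fin.sum_univ_five, Fin.sum_univ_five, Fin.sum_univ_five]
    show x 0 * (a * y1 0 + b * y2 0) + x 1 * (a * y1 1 + b * y2 1) + x 2 * (a * y1 2 + b * y2 2)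
      + x 3 * (a * y1 3 + b * y2 3) + x 4 * (a * y1 4 + b * y2 4) = _
    ring
  show (-1:ℝ) ≤ ∑ k, x k * (a • y1 + b • y2) k
  rw [expand]
  nlinarith [mul_nonneg ha (show (0:ℝ) ≤ ∑ k, x k * y1 k + 1 by linarith),
    mul_nonneg hb (show (0:ℝ) ≤ ∑ k, x k * y2 k + 1 by linarith)]

private lemma open_affine (c a0 a1 a2 a3 a4 : ℝ) :
    IsOpen {x : Fin 5 → ℝ | 0 < c + a0 * x 0 + a1 * x 1 + a2 * x 2 + a3 * x 3 + a4 * x 4} :=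
  isOpen_lt continuous_const (by fun_prop)

set_option maxHeartbeats 2000000 in
/-- The polar dual of `Δ' = conv{m'₁, …, m'₁₄}` equals `conv{v'₁, …, v'₆}`;
in particular `Δ'` is reflexive: both are convex hulls of finitely many
lattice points and contain the origin in their interiors. -/
theorem stmt_8 :
    {y : Fin 5 → ℝ |
        ∀ x ∈ convexHull ℝ (Set.range mVerts), -1 ≤ ∑ i, x i * y i} =
      convexHull ℝ (Set.range vVerts) ∧
    (0 : Fin 5 → ℝ) ∈ interior (convexHull ℝ (Set.range mVerts)) ∧
    (0 : Fin 5 → ℝ) ∈ interior (convexHull ℝ (Set.range vVerts)) := by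
  have hPV : {y : Fin 5 → ℝ |
      ∀ x ∈ convexHull ℝ (Set.range mVerts), -1 ≤ ∑ i, x i * y i} =
      convexHull ℝ (Set.range vVerts) := by
    apply Set.eq_of_subset_of_subset
    · intro y hy
      exact hard y (fun i => hy (mVerts i) (subset_convexHull ℝ _ (Set.mem_range_self i)))
    · intro y hy
      refine convexHull_min ?_ convex_P hy
      rintro _ ⟨j, rfl⟩
      exact key (vVerts j) (hnum j)
  refine ⟨hPV, ?_, ?_⟩
  · rw [mem_interior]
    refine ⟨((((({x : Fin 5 → ℝ | 0 < ((1)/840) + ((-29)/840) * x 0 + ((-1)/20) * x 1 + ((-7)/60) * x 2 + ((1)/420) * x 3 + ((1)/280) * x 4} ∩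
      {x : Fin 5 → ℝ | 0 < ((29)/840) + ((-1)/840) * x 0 + ((1)/20) * x 1 + ((7)/60) * x 2 + ((29)/420) * x 3 + ((29)/280) * x 4}) ∩
      {x : Fin 5 → ℝ | 0 < ((5)/18) + ((-1)/18) * x 0 + (0) * x 1 + ((-2)/9) * x 2 + ((-4)/9) * x 3 + ((-1)/6) * x 4}) ∩
      {x : Fin 5 → ℝ | 0 < ((1)/2) + (0) * x 0 + (0) * x 1 + (0) * x 2 + (0) * x 3 + ((-1)/2) * x 4}) ∩
      {x : Fin 5 → ℝ | 0 < ((1)/12) + ((1)/12) * x 0 + (0) * x 1 + ((1)/3) * x 2 + ((1)/6) * x 3 + ((1)/4) * x 4}) ∩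
      {x : Fin 5 → ℝ | 0 < ((13)/126) + ((1)/126) * x 0 + (0) * x 1 + ((-1)/9) * x 2 + ((13)/63) * x 3 + ((13)/42) * x 4}), ?_, ?_, ?_⟩
    · rintro x ⟨⟨⟨⟨⟨p1, p2⟩, p3⟩, p4⟩, p5⟩, p6⟩
      exact memM_aux x
        (((1)/840) + ((-29)/840) * x 0 + ((-1)/20) * x 1 + ((-7)/60) * x 2 + ((1)/420) * x 3 + ((1)/280) * x 4)
        (((29)/840) + ((-1)/840) * x 0 + ((1)/20) * x 1 + ((7)/60) * x 2 + ((29)/420) * x 3 + ((29)/280) * x 4)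
        (0:ℝ)
        (0:ℝ)
        (0:ℝ)
        (((5)/18) + ((-1)/18) * x 0 + (0) * x 1 + ((-2)/9) * x 2 + ((-4)/9) * x 3 + ((-1)/6) * x 4)
        (((1)/2) + (0) * x 0 + (0) * x 1 + (0) * x 2 + (0) * x 3 + ((-1)/2) * x 4)
        (((1)/12) + ((1)/12) * x 0 + (0) * x 1 + ((1)/3) * x 2 + ((1)/6) * x 3 + ((1)/4) * x 4)
        (0:ℝ)
        (0:ℝ)
        (0:ℝ)
        (((13)/126) + ((1)/126) * x 0 + (0) * x 1 + ((-1)/9) * x 2 + ((13)/63) * x 3 + ((13)/42) * x 4)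
        (0:ℝ)
        (0:ℝ)
        (le_of_lt p1)
        (le_of_lt p2)
        (by norm_num)
        (by norm_num)
        (by norm_num)
        (le_of_lt p3)
        (le_of_lt p4)
        (le_of_lt p5)
        (by norm_num)
        (by norm_num)
        (by norm_num)
        (le_of_lt p6)
        (by norm_num)
        (by norm_num)
        (by ring)
        (by ring)
        (by ring)
        (by ring)
        (by ring)
        (by ring)
    · exact ((((((open_affine ((1)/840) ((-29)/840) ((-1)/20) ((-7)/60) ((1)/420) ((1)/280)).inter (open_affine ((29)/840) ((-1)/840) ((1)/20) ((7)/60) ((29)/420) ((29)/280))).inter (open_affine ((5)/18) ((-1)/18) (0) ((-2)/9) ((-4)/9) ((-1)/6))).inter (open_affine ((1)/2) (0) (0) (0) (0) ((-1)/2))).inter (open_affine ((1)/12) ((1)/12) (0) ((1)/3) ((1)/6) ((1)/4))).inter (open_affine ((13)/126) ((1)/126) (0) ((-1)/9) ((13)/63) ((13)/42)))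
    · refine ⟨⟨⟨⟨⟨?_, ?_⟩, ?_⟩, ?_⟩, ?_⟩, ?_⟩ <;>
        simp only [Set.mem_setOf_eq, Pi.zero_apply] <;> norm_num
  · rw [mem_interior]
    refine ⟨⋂ i : Fin 14, {y : Fin 5 → ℝ | -1 < ∑ k, mVerts i k * y k}, ?_, ?_, ?_⟩
    · intro y hy
      rw [hPV] at *
      exact hard y (fun i => le_of_lt (Set.mem_iInter.mp hy i))
    · exact isOpen_iInter_of_finite fun i => isOpen_lt continuous_const (by fun_prop)
    · refine Set.mem_iInter.mpr fun i => ?_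
      show (-1:ℝ) < ∑ k, mVerts i k * (0 : Fin 5 → ℝ) k
      simp
end
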